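/- Let Ω ⊂ ℝⁿ be a bounded open set with C¹ boundary and let f, g be bounded measurable functions on Ω with g ≥ 0. Define Φ(λ) := inf_{v ∈ K(Ω)} J_{f,g,λ,Ω}(v) for λ ∈ (−∞, λ*(Ω)). Then Φ takes values in (−∞, 0], Φ is concave on (−∞, λ*(Ω)), and if Φ(λ₀) < 0 for some λ₀ < λ*(Ω) then Φ is strictly decreasing on a neighborhood of λ₀ in (−∞, λ*(Ω)). -/

import Mathlib

open MeasureTheory Set Metric
open scoped ENNReal NNReal RealInnerProductSpace Topology

noncomputable section

/-- Euclidean `n`-space `ℝⁿ`. -/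
abbrev Euc (n : ℕ) := EuclideanSpace ℝ (Fin n)

/-- `φ ∈ C_c^∞(Ω)`: a smooth function on `ℝⁿ` with compact support contained in `Ω`. -/
def IsTestFun {n : ℕ} (Ω : Set (Euc n)) (φ : Euc n → ℝ) : Prop :=
  ContDiff ℝ (⊤ : ℕ∞) φ ∧ HasCompactSupport φ ∧ tsupport φ ⊆ Ω

/-- An element of `H¹₀(Ω)`: an `L²` function on `ℝⁿ` together with its weak gradient
(also in `L²`), which can be approximated in the `H¹` norm by smooth functions compactly
supported in `Ω`.  Elements are regarded as functions on `ℝⁿ` vanishing outside `Ω`. -/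
structure H10 (n : ℕ) (Ω : Set (Euc n)) where
  toFun : Euc n → ℝ
  grad : Euc n → Euc n
  memL2 : MemLp toFun 2 (volume : Measure (Euc n))
  grad_memL2 : MemLp grad 2 (volume : Measure (Euc n))
  weak_grad : ∀ φ : Euc n → ℝ, IsTestFun (Set.univ : Set (Euc n)) φ →
    ∫ x, toFun x • gradient φ x = - ∫ x, φ x • grad x
  approx : ∀ ε : ℝ, 0 < ε → ∃ φ : Euc n → ℝ, IsTestFun Ω φ ∧
    (∫ x, ((toFun x - φ x) ^ 2 + ‖grad x - gradient φ x‖ ^ 2)) < ε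

/-- The squared `H¹`-norm `‖u‖²_{H¹} = ∫ (|u|² + |∇u|²)`. -/
def h1NormSq {n : ℕ} {Ω : Set (Euc n)} (u : H10 n Ω) : ℝ :=
  ∫ x, ((u.toFun x) ^ 2 + ‖u.grad x‖ ^ 2)

/-- The real-valued indicator function `χ_S`. -/
def chi {n : ℕ} (S : Set (Euc n)) (x : Euc n) : ℝ :=
  S.indicator (fun _ => (1 : ℝ)) x

/-- The set `{u > 0}`: points `x₀` for which there is a nonnegative test function
`φ ∈ C_c^∞(Ω)` with `φ x₀ > 0` and `φ ≤ u` a.e. in `Ω`. -/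
def posSet {n : ℕ} (Ω : Set (Euc n)) (u : Euc n → ℝ) : Set (Euc n) :=
  {x₀ | ∃ φ : Euc n → ℝ, IsTestFun Ω φ ∧ (∀ x, 0 ≤ φ x) ∧ 0 < φ x₀ ∧
    ∀ᵐ x ∂((volume : Measure (Euc n)).restrict Ω), φ x ≤ u x}

/-- Membership in the constraint set `K(Ω) = {u ∈ H¹₀(Ω) : u ≥ 0 a.e.}`. -/
def memK {n : ℕ} {Ω : Set (Euc n)} (u : H10 n Ω) : Prop :=
  0 ≤ᵐ[(volume : Measure (Euc n))] u.toFun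

/-- The functional `J_{f,g,λ,Ω}(u) = ∫_Ω (|∇u|² − λu² − 2fu + g²χ_{{u>0}})`. -/
def Jfun {n : ℕ} (f g : Euc n → ℝ) (lam : ℝ) (Ω : Set (Euc n)) (u : H10 n Ω) : ℝ :=
  ∫ x in Ω, (‖u.grad x‖ ^ 2 - lam * (u.toFun x) ^ 2 - 2 * f x * u.toFun x
    + (g x) ^ 2 * chi (posSet Ω u.toFun) x)

/-- The fundamental tone `λ*(Ω)`. -/
def fundTone {n : ℕ} (Ω : Set (Euc n)) : ℝ :=
  sInf {r : ℝ | ∃ φ : Euc n → ℝ, IsTestFun Ω φ ∧ φ ≠ 0 ∧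
    r = (∫ x, ‖gradient φ x‖ ^ 2) / (∫ x, (φ x) ^ 2)}

/-- `u` is a global minimizer of `J_{f,g,λ,Ω}` in `K(Ω)`. -/
def IsGlobalMinimizer {n : ℕ} (f g : Euc n → ℝ) (lam : ℝ) (Ω : Set (Euc n))
    (u : H10 n Ω) : Prop :=
  memK u ∧ ∀ v : H10 n Ω, memK v → Jfun f g lam Ω u ≤ Jfun f g lam Ω v

/-- `u` is a local minimizer of `J_{f,g,λ,Ω}` in `K(Ω)`. -/
def IsLocalMinimizer {n : ℕ} (f g : Euc n → ℝ) (lam : ℝ) (Ω : Set (Euc n))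
    (u : H10 n Ω) : Prop :=
  memK u ∧ ∃ ε : ℝ, 0 < ε ∧ ∀ v : H10 n Ω, memK v →
    (∫ x in Ω, (‖v.grad x - u.grad x‖ ^ 2
      + |chi (posSet Ω v.toFun) x - chi (posSet Ω u.toFun) x|)) < ε →
    Jfun f g lam Ω u ≤ Jfun f g lam Ω v

/-- The `L^∞(Ω)` norm: essential supremum of `|f|` on `Ω`. -/
def linfNorm {n : ℕ} (Ω : Set (Euc n)) (f : Euc n → ℝ) : ℝ :=
  essSup (fun x => |f x|) ((volume : Measure (Euc n)).restrict Ω)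

/-- `f` is bounded on `Ω`. -/
def BddOn {n : ℕ} (Ω : Set (Euc n)) (f : Euc n → ℝ) : Prop :=
  ∃ C : ℝ, ∀ x ∈ Ω, |f x| ≤ C

/-- `Ω` has Lipschitz boundary: near every boundary point, `Ω` is the region above the
graph of a Lipschitz function in some direction. -/
def HasLipschitzBoundary {n : ℕ} (Ω : Set (Euc n)) : Prop :=
  ∀ x ∈ frontier Ω, ∃ e : Euc n, ‖e‖ = 1 ∧ ∃ r : ℝ, 0 < r ∧
    ∃ (c : NNReal) (ψ : ((Submodule.span ℝ ({e} : Set (Euc n)))ᗮ : Submodule ℝ (Euc n)) → ℝ),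
      LipschitzWith c ψ ∧
      ∀ z ∈ Metric.ball x r,
        (z ∈ Ω ↔ ψ (Submodule.orthogonalProjectionOnto (Submodule.span ℝ ({e} : Set (Euc n)))ᗮ z) < ⟪z, e⟫)

/-- `Ω` has `C¹` boundary: near every boundary point, `Ω` is the region above the graph
of a `C¹` function in some direction. -/
def HasC1Boundary {n : ℕ} (Ω : Set (Euc n)) : Prop :=
  ∀ x ∈ frontier Ω, ∃ e : Euc n, ‖e‖ = 1 ∧ ∃ r : ℝ, 0 < r ∧
    ∃ ψ : ((Submodule.span ℝ ({e} : Set (Euc n)))ᗮ : Submodule ℝ (Euc n)) → ℝ,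
      ContDiff ℝ 1 ψ ∧
      ∀ z ∈ Metric.ball x r,
        (z ∈ Ω ↔ ψ (Submodule.orthogonalProjectionOnto (Submodule.span ℝ ({e} : Set (Euc n)))ᗮ z) < ⟪z, e⟫)

/-- The Laplacian of a function `u : ℝⁿ → ℝ`. -/
def lapl {n : ℕ} (u : Euc n → ℝ) (x : Euc n) : ℝ :=
  ∑ i : Fin n, iteratedFDeriv ℝ 2 u x (fun _ => EuclideanSpace.single i (1 : ℝ))

/-- The average of `u` over the sphere `∂B_r(x₀)` with respect to the
`(n−1)`-dimensional Hausdorff measure. -/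
def sphAvg {n : ℕ} (x₀ : Euc n) (r : ℝ) (u : Euc n → ℝ) : ℝ :=
  (∫ x in Metric.sphere x₀ r, u x ∂(μH[(n : ℝ) - 1])) /
    (μH[(n : ℝ) - 1] (Metric.sphere x₀ r)).toReal

/-- `d(x) = dist(x, ℝⁿ ∖ {u > 0})`. -/
def distOut {n : ℕ} (Ω : Set (Euc n)) (u : Euc n → ℝ) (x : Euc n) : ℝ :=
  Metric.infDist x ((posSet Ω u)ᶜ)

/-- `g² ∈ W^{1,1}(Ω)`: `g²` has a weak gradient `F ∈ L¹(Ω; ℝⁿ)`. -/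
def SqW11 {n : ℕ} (Ω : Set (Euc n)) (g : Euc n → ℝ) : Prop :=
  ∃ F : Euc n → Euc n, IntegrableOn F Ω (volume : Measure (Euc n)) ∧
    ∀ φ : Euc n → ℝ, IsTestFun Ω φ → ∀ i : Fin n,
      ∫ x in Ω, (g x) ^ 2 * (gradient φ x) i = - ∫ x in Ω, (F x) i * φ x

/-- `v` is locally Lipschitz on `U`. -/
def LocallyLipschitzOnSet {n : ℕ} (U : Set (Euc n)) (v : Euc n → ℝ) : Prop :=
  ∀ x ∈ U, ∃ s ∈ 𝓝 x, ∃ c : NNReal, LipschitzOnWith c v s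

/-- The distributional equation `(Δ + k² + ρχ_D)v = g ℋ^{n−1}⌊∂D` in `V`. -/
def ScatteringEq {n : ℕ} (k : ℝ) (D V : Set (Euc n)) (ρ v g : Euc n → ℝ) : Prop :=
  ∀ φ : Euc n → ℝ, IsTestFun V φ →
    (∫ x in V, v x * (lapl φ x + k ^ 2 * φ x))
      + (∫ x in V ∩ D, ρ x * v x * φ x)
      = ∫ x in frontier D, g x * φ x ∂(μH[(n : ℝ) - 1])

/-- The Bessel function of the first kind `J_ν`. -/
def besselJ (ν : ℝ) (t : ℝ) : ℝ :=
  ∑' m : ℕ, ((-1 : ℝ) ^ m / ((m.factorial : ℝ) * Real.Gamma ((m : ℝ) + ν + 1))) *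
    (t / 2) ^ (2 * (m : ℝ) + ν)

/-- `Ψ` is a fundamental solution of `−(Δ + k²)` on `ℝⁿ`. -/
def IsFundSol {n : ℕ} (k : ℝ) (Ψ : Euc n → ℂ) : Prop :=
  LocallyIntegrable Ψ (volume : Measure (Euc n)) ∧
    ∀ φ : Euc n → ℝ, IsTestFun (Set.univ : Set (Euc n)) φ →
      - ∫ x, Ψ x * ((lapl φ x + k ^ 2 * φ x : ℝ) : ℂ) = ((φ 0 : ℝ) : ℂ)

/-- The conical domain `Σ_θ = {(x,y) ∈ ℝ^{n−1} × ℝ : y > −|x| tan θ}`. -/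
def coneSet (n : ℕ) (hn : 0 < n) (θ : ℝ) : Set (Euc n) :=
  {z | -(Real.sqrt (∑ i : Fin (n - 1), (z (Fin.castLE (Nat.sub_le n 1) i)) ^ 2)) * Real.tan θ
        < z ⟨n - 1, Nat.sub_lt hn Nat.one_pos⟩}

/-- The value function `Φ(λ) = inf_{v ∈ K(Ω)} J_{f,g,λ,Ω}(v)`. -/
def Phi {n : ℕ} (f g : Euc n → ℝ) (Ω : Set (Euc n)) (lam : ℝ) : ℝ :=
  sInf {r : ℝ | ∃ u : H10 n Ω, memK u ∧ r = Jfun f g lam Ω u}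


/-! ### Auxiliary lemmas for `Phi_concave` -/

section PhiAux

lemma norm_toLp_sq {α : Type*} [MeasurableSpace α] {μ : Measure α}
    {E : Type*} [NormedAddCommGroup E] [InnerProductSpace ℝ E]
    {f : α → E} (hf : MemLp f 2 μ) :
    ‖hf.toLp f‖ ^ 2 = ∫ x, ‖f x‖ ^ 2 ∂μ := by
  rw [← real_inner_self_eq_norm_sq, MeasureTheory.L2.inner_def]
  refine integral_congr_ae (hf.coeFn_toLp.mono fun x hx => ?_)
  simp only []
  rw [hx, real_inner_self_eq_norm_sq]

variable {n : ℕ} {Ω : Set (Euc n)} {φ : Euc n → ℝ} {f g : Euc n → ℝ} {Cf Cg : ℝ}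

lemma testfun_memL2 (h : IsTestFun Ω φ) : MemLp φ 2 (volume : Measure (Euc n)) :=
  h.1.continuous.memLp_of_hasCompactSupport h.2.1

lemma gradient_continuous (h : ContDiff ℝ (⊤ : ℕ∞) φ) : Continuous (gradient φ) := by
  unfold gradient
  exact (InnerProductSpace.toDual ℝ (Euc n)).symm.continuous.comp
    (h.continuous_fderiv (by norm_num))

lemma gradient_hcs (h : HasCompactSupport φ) : HasCompactSupport (gradient φ) := by
  unfold gradient
  exact (h.fderiv ℝ).comp_left (g := (InnerProductSpace.toDual ℝ (Euc n)).symm) (map_zero _)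

lemma gradient_eq_zero_of_nmem {x : Euc n} (h : x ∉ tsupport φ) : gradient φ x = 0 := by
  unfold gradient
  rw [fderiv_of_notMem_tsupport _ h, map_zero]

lemma gradfun_memL2 (h : IsTestFun Ω φ) : MemLp (gradient φ) 2 (volume : Measure (Euc n)) :=
  (gradient_continuous h.1).memLp_of_hasCompactSupport (gradient_hcs h.2.1)

lemma integral_sq_pos (h : IsTestFun Ω φ) (hz : φ ≠ 0) : 0 < ∫ x, (φ x) ^ 2 := by
  have hInt : Integrable (fun x => (φ x) ^ 2) := (testfun_memL2 h).integrable_sq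
  rw [integral_pos_iff_support_of_nonneg (fun x => sq_nonneg (φ x)) hInt]
  have : Function.support (fun x => (φ x) ^ 2) = Function.support φ := by
    ext x; simp [pow_eq_zero_iff]
  rw [this]
  exact (h.1.continuous.isOpen_support).measure_pos volume
    (Function.support_nonempty_iff.2 hz)

lemma fundTone_set_nonneg :
    ∀ r ∈ {r : ℝ | ∃ φ : Euc n → ℝ, IsTestFun Ω φ ∧ φ ≠ 0 ∧
      r = (∫ x, ‖gradient φ x‖ ^ 2) / (∫ x, (φ x) ^ 2)}, 0 ≤ r := by
  rintro r ⟨φ, hφ, hz, rfl⟩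
  exact div_nonneg (integral_nonneg fun x => sq_nonneg _) (integral_nonneg fun x => sq_nonneg _)

lemma fundTone_nonneg : 0 ≤ fundTone Ω := Real.sInf_nonneg fundTone_set_nonneg

lemma fundTone_le (h : IsTestFun Ω φ) :
    fundTone Ω * ∫ x, (φ x) ^ 2 ≤ ∫ x, ‖gradient φ x‖ ^ 2 := by
  by_cases hz : φ = 0
  · subst hz
    have h1 : ∀ x : Euc n, ((0 : Euc n → ℝ) x) ^ 2 = 0 := fun x => by simp
    have h2 : ∀ x : Euc n, ‖gradient (0 : Euc n → ℝ) x‖ ^ 2 = 0 := fun x => by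
      have : gradient (0 : Euc n → ℝ) x = 0 := gradient_const x (0 : ℝ)
      simp [this]
    simp only [h1, h2, integral_zero, mul_zero]
    exact le_refl 0
  · have hden := integral_sq_pos h hz
    have hmem : (∫ x, ‖gradient φ x‖ ^ 2) / (∫ x, (φ x) ^ 2) ∈
        {r : ℝ | ∃ ψ : Euc n → ℝ, IsTestFun Ω ψ ∧ ψ ≠ 0 ∧
          r = (∫ x, ‖gradient ψ x‖ ^ 2) / (∫ x, (ψ x) ^ 2)} := ⟨φ, h, hz, rfl⟩
    have h1 : fundTone Ω ≤ (∫ x, ‖gradient φ x‖ ^ 2) / (∫ x, (φ x) ^ 2) :=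
      csInf_le ⟨0, fundTone_set_nonneg⟩ hmem
    calc fundTone Ω * ∫ x, (φ x) ^ 2
        ≤ ((∫ x, ‖gradient φ x‖ ^ 2) / (∫ x, (φ x) ^ 2)) * ∫ x, (φ x) ^ 2 :=
          mul_le_mul_of_nonneg_right h1 hden.le
      _ = ∫ x, ‖gradient φ x‖ ^ 2 := div_mul_cancel₀ _ hden.ne'

lemma sq_norm_real (r : ℝ) : ‖r‖ ^ 2 = r ^ 2 := by rw [Real.norm_eq_abs, sq_abs]

lemma h10_poincare (u : H10 n Ω) :
    fundTone Ω * ∫ x in Ω, (u.toFun x) ^ 2 ≤ ∫ x in Ω, ‖u.grad x‖ ^ 2 := by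
  set μ := (volume : Measure (Euc n)).restrict Ω with hμ
  set s := Real.sqrt (fundTone Ω) with hsdef
  have hs0 : 0 ≤ s := Real.sqrt_nonneg _
  have hs2 : s ^ 2 = fundTone Ω := Real.sq_sqrt fundTone_nonneg
  set U := (u.memL2.restrict Ω).toLp u.toFun with hU
  set G := (u.grad_memL2.restrict Ω).toLp u.grad with hG
  have hUsq : ‖U‖ ^ 2 = ∫ x in Ω, (u.toFun x) ^ 2 := by
    rw [hU, norm_toLp_sq]
    exact integral_congr_ae (Filter.Eventually.of_forall fun x => sq_norm_real _)
  have hGsq : ‖G‖ ^ 2 = ∫ x in Ω, ‖u.grad x‖ ^ 2 := norm_toLp_sq _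
  have main : s * ‖U‖ ≤ ‖G‖ := by
    refine _root_.le_of_forall_pos_le_add fun ε' hε' => ?_
    set ε := (ε' / (1 + s)) ^ 2 with hε
    have h1s : 0 < 1 + s := by linarith
    have hεpos : 0 < ε := by positivity
    have hsqε : Real.sqrt ε = ε' / (1 + s) := Real.sqrt_sq (by positivity)
    obtain ⟨φ, hφ, happ⟩ := u.approx ε hεpos
    have hφ2 : MemLp φ 2 μ := (testfun_memL2 hφ).restrict Ω
    have hγ2 : MemLp (gradient φ) 2 μ := (gradfun_memL2 hφ).restrict Ω
    set ΦL := hφ2.toLp φ with hΦL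
    set ΓL := hγ2.toLp (gradient φ) with hΓL
    have hiA : Integrable (fun x => (u.toFun x - φ x) ^ 2) (volume : Measure (Euc n)) := by
      have := (u.memL2.sub (testfun_memL2 hφ)).integrable_sq
      simpa [Pi.sub_apply] using this
    have hiB : Integrable (fun x => ‖u.grad x - gradient φ x‖ ^ 2) (volume : Measure (Euc n)) := by
      have := ((u.grad_memL2.sub (gradfun_memL2 hφ)).norm).integrable_sq
      simpa [Pi.sub_apply] using this
    have hsplit := integral_add hiA hiB
    have hA : (∫ x, (u.toFun x - φ x) ^ 2) < ε := by
      have h2 : 0 ≤ ∫ x, ‖u.grad x - gradient φ x‖ ^ 2 :=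
        integral_nonneg fun x => sq_nonneg _
      rw [hsplit] at happ; linarith
    have hB : (∫ x, ‖u.grad x - gradient φ x‖ ^ 2) < ε := by
      have h2 : 0 ≤ ∫ x, (u.toFun x - φ x) ^ 2 := integral_nonneg fun x => sq_nonneg _
      rw [hsplit] at happ; linarith
    have hUΦ : ‖U - ΦL‖ ≤ Real.sqrt ε := by
      have heq : U - ΦL = ((u.memL2.restrict Ω).sub hφ2).toLp (u.toFun - φ) :=
        (MemLp.toLp_sub _ _).symm
      have hsq : ‖U - ΦL‖ ^ 2 ≤ ε := by
        rw [heq, norm_toLp_sq]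
        have e1 : (∫ x, ‖(u.toFun - φ) x‖ ^ 2 ∂μ) = ∫ x in Ω, (u.toFun x - φ x) ^ 2 :=
          integral_congr_ae (Filter.Eventually.of_forall fun x => by
            simp [Pi.sub_apply, sq_norm_real])
        rw [e1]
        calc (∫ x in Ω, (u.toFun x - φ x) ^ 2)
            ≤ ∫ x, (u.toFun x - φ x) ^ 2 :=
              setIntegral_le_integral hiA (Filter.Eventually.of_forall fun x => sq_nonneg _)
          _ ≤ ε := hA.le
      exact (Real.le_sqrt (norm_nonneg _) hεpos.le).2 hsq
    have hGΓ : ‖G - ΓL‖ ≤ Real.sqrt ε := by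
      have heq : G - ΓL = ((u.grad_memL2.restrict Ω).sub hγ2).toLp (u.grad - gradient φ) :=
        (MemLp.toLp_sub _ _).symm
      have hsq : ‖G - ΓL‖ ^ 2 ≤ ε := by
        rw [heq, norm_toLp_sq]
        have e1 : (∫ x, ‖(u.grad - gradient φ) x‖ ^ 2 ∂μ)
            = ∫ x in Ω, ‖u.grad x - gradient φ x‖ ^ 2 :=
          integral_congr_ae (Filter.Eventually.of_forall fun x => by simp [Pi.sub_apply])
        rw [e1]
        calc (∫ x in Ω, ‖u.grad x - gradient φ x‖ ^ 2)
            ≤ ∫ x, ‖u.grad x - gradient φ x‖ ^ 2 :=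
              setIntegral_le_integral hiB (Filter.Eventually.of_forall fun x => sq_nonneg _)
          _ ≤ ε := hB.le
      exact (Real.le_sqrt (norm_nonneg _) hεpos.le).2 hsq
    have hφineq : s * ‖ΦL‖ ≤ ‖ΓL‖ := by
      have hΦsq : ‖ΦL‖ ^ 2 = ∫ x, (φ x) ^ 2 := by
        rw [hΦL, norm_toLp_sq]
        have e1 : (∫ x, ‖φ x‖ ^ 2 ∂μ) = ∫ x in Ω, (φ x) ^ 2 :=
          integral_congr_ae (Filter.Eventually.of_forall fun x => sq_norm_real _)
        rw [e1]
        exact setIntegral_eq_integral_of_forall_compl_eq_zero fun x hx => by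
          have : φ x = 0 := image_eq_zero_of_notMem_tsupport fun hm => hx (hφ.2.2 hm)
          simp [this]
      have hΓsq : ‖ΓL‖ ^ 2 = ∫ x, ‖gradient φ x‖ ^ 2 := by
        rw [hΓL, norm_toLp_sq]
        exact setIntegral_eq_integral_of_forall_compl_eq_zero fun x hx => by
          have : gradient φ x = 0 :=
            gradient_eq_zero_of_nmem fun hm => hx (hφ.2.2 hm)
          simp [this]
      have hsq : (s * ‖ΦL‖) ^ 2 ≤ ‖ΓL‖ ^ 2 := by
        rw [mul_pow, hs2, hΦsq, hΓsq]; exact fundTone_le hφ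
      have := Real.sqrt_le_sqrt hsq
      rwa [Real.sqrt_sq (by positivity), Real.sqrt_sq (norm_nonneg _)] at this
    have t1 : ‖U‖ ≤ ‖ΦL‖ + ‖U - ΦL‖ := by
      have : U = ΦL + (U - ΦL) := by abel
      calc ‖U‖ = ‖ΦL + (U - ΦL)‖ := by rw [← this]
        _ ≤ ‖ΦL‖ + ‖U - ΦL‖ := norm_add_le _ _
    have t2 : ‖ΓL‖ ≤ ‖G‖ + ‖G - ΓL‖ := by
      have : ΓL = G + (ΓL - G) := by abel
      calc ‖ΓL‖ = ‖G + (ΓL - G)‖ := by rw [← this]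
        _ ≤ ‖G‖ + ‖ΓL - G‖ := norm_add_le _ _
        _ = ‖G‖ + ‖G - ΓL‖ := by rw [norm_sub_rev]
    calc s * ‖U‖ ≤ s * (‖ΦL‖ + ‖U - ΦL‖) := mul_le_mul_of_nonneg_left t1 hs0
      _ = s * ‖ΦL‖ + s * ‖U - ΦL‖ := by ring
      _ ≤ ‖ΓL‖ + s * Real.sqrt ε := by
          have := mul_le_mul_of_nonneg_left hUΦ hs0
          linarith
      _ ≤ ‖G‖ + ‖G - ΓL‖ + s * Real.sqrt ε := by linarith
      _ ≤ ‖G‖ + Real.sqrt ε + s * Real.sqrt ε := by linarith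
      _ = ‖G‖ + (1 + s) * Real.sqrt ε := by ring
      _ = ‖G‖ + ε' := by rw [hsqε]; field_simp
  have hsq : (s * ‖U‖) ^ 2 ≤ ‖G‖ ^ 2 := by
    have h0 : 0 ≤ s * ‖U‖ := by positivity
    nlinarith [norm_nonneg G]
  rw [mul_pow, hs2, hUsq, hGsq] at hsq
  exact hsq

lemma chi_nonneg (S : Set (Euc n)) (x : Euc n) : 0 ≤ chi S x := by
  unfold chi; by_cases h : x ∈ S <;> simp [h]

lemma chi_le_one (S : Set (Euc n)) (x : Euc n) : chi S x ≤ 1 := by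
  unfold chi; by_cases h : x ∈ S <;> simp [h]

lemma isOpen_posSet (v : Euc n → ℝ) : IsOpen (posSet Ω v) := by
  rw [isOpen_iff_mem_nhds]
  rintro x₀ ⟨φ, hφ, hφ0, hφx, hle⟩
  have hopen : IsOpen {y | 0 < φ y} := isOpen_lt continuous_const hφ.1.continuous
  have hsub : {y | 0 < φ y} ⊆ posSet Ω v := fun y hy => ⟨φ, hφ, hφ0, hy, hle⟩
  exact Filter.mem_of_superset (hopen.mem_nhds hφx) hsub

lemma posSet_zero (hΩopen : IsOpen Ω) : posSet Ω (fun _ : Euc n => (0 : ℝ)) = ∅ := by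
  ext x₀
  simp only [mem_empty_iff_false, iff_false]
  rintro ⟨φ, hφ, hφ0, hφx, hle⟩
  have hx₀Ω : x₀ ∈ Ω := hφ.2.2 (subset_tsupport φ (by
    simp only [Function.mem_support]; exact hφx.ne'))
  have hballex : ∃ r > 0, Metric.ball x₀ r ⊆ Ω ∩ {y | 0 < φ y} := by
    have : IsOpen (Ω ∩ {y | 0 < φ y}) :=
      hΩopen.inter (isOpen_lt continuous_const hφ.1.continuous)
    exact Metric.isOpen_iff.1 this x₀ ⟨hx₀Ω, hφx⟩
  obtain ⟨r, hr, hball⟩ := hballex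
  have hmeas : MeasurableSet ({x : Euc n | φ x ≤ 0}ᶜ) :=
    (measurableSet_le hφ.1.continuous.measurable measurable_const).compl
  have hnull : volume ({x : Euc n | φ x ≤ 0}ᶜ ∩ Ω) = 0 := by
    have h1 := hle
    rw [Filter.eventually_iff, mem_ae_iff] at h1
    rwa [Measure.restrict_apply hmeas] at h1
  have hsub2 : Metric.ball x₀ r ⊆ {x : Euc n | φ x ≤ 0}ᶜ ∩ Ω := fun y hy =>
    ⟨fun (hle' : φ y ≤ 0) => absurd hle' (not_le.2 (hball hy).2), (hball hy).1⟩
  have := measure_mono (μ := (volume : Measure (Euc n))) hsub2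
  rw [hnull] at this
  exact absurd (le_antisymm this zero_le) (measure_ball_pos volume x₀ hr).ne'

def zeroH10 (n : ℕ) (Ω : Set (Euc n)) : H10 n Ω where
  toFun := fun _ => 0
  grad := fun _ => 0
  memL2 := MemLp.zero
  grad_memL2 := MemLp.zero
  weak_grad := fun φ _ => by simp
  approx := fun ε hε => by
    refine ⟨fun _ => 0, ⟨contDiff_const, ?_, ?_⟩, ?_⟩
    · show IsCompact (tsupport fun _ => (0 : ℝ))
      simp [tsupport]
    · simp [tsupport]
    · simpa [gradient_const] using hε

lemma memK_zero (Ω : Set (Euc n)) : memK (zeroH10 n Ω) :=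
  Filter.Eventually.of_forall fun _ => le_refl _

lemma J_zero (hΩopen : IsOpen Ω) (f g : Euc n → ℝ) (lam : ℝ) :
    Jfun f g lam Ω (zeroH10 n Ω) = 0 := by
  unfold Jfun
  have h : ∀ x : Euc n, ‖(zeroH10 n Ω).grad x‖ ^ 2 - lam * ((zeroH10 n Ω).toFun x) ^ 2
      - 2 * f x * (zeroH10 n Ω).toFun x
      + (g x) ^ 2 * chi (posSet Ω (zeroH10 n Ω).toFun) x = 0 := fun x => by
    show ‖(0 : Euc n)‖ ^ 2 - lam * (0 : ℝ) ^ 2 - 2 * f x * 0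
      + (g x) ^ 2 * chi (posSet Ω (fun _ => (0 : ℝ))) x = 0
    rw [posSet_zero hΩopen]
    simp [chi]
  simp only [h, integral_zero]

lemma finiteRestrict (hΩbdd : Bornology.IsBounded Ω) :
    IsFiniteMeasure ((volume : Measure (Euc n)).restrict Ω) :=
  ⟨by rw [Measure.restrict_apply_univ]; exact hΩbdd.measure_lt_top⟩

lemma int_grad_sq (u : H10 n Ω) :
    Integrable (fun x => ‖u.grad x‖ ^ 2) ((volume : Measure (Euc n)).restrict Ω) := by
  have := ((u.grad_memL2.restrict Ω).norm).integrable_sq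
  simpa using this

lemma int_u_sq (u : H10 n Ω) :
    Integrable (fun x => (u.toFun x) ^ 2) ((volume : Measure (Euc n)).restrict Ω) :=
  (u.memL2.restrict Ω).integrable_sq

lemma int_u (hΩbdd : Bornology.IsBounded Ω) (u : H10 n Ω) :
    Integrable u.toFun ((volume : Measure (Euc n)).restrict Ω) := by
  haveI := finiteRestrict hΩbdd
  exact (u.memL2.restrict Ω).integrable (by norm_num)

lemma int_fu (hΩopen : IsOpen Ω) (hΩbdd : Bornology.IsBounded Ω) (hfmeas : Measurable f)
    (hCf : ∀ x ∈ Ω, |f x| ≤ Cf) (u : H10 n Ω) :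
    Integrable (fun x => 2 * f x * u.toFun x) ((volume : Measure (Euc n)).restrict Ω) := by
  have hb : Integrable (fun x => (2 * Cf) * |u.toFun x|)
      ((volume : Measure (Euc n)).restrict Ω) := ((int_u hΩbdd u).abs).const_mul _
  refine hb.mono' ?_ ?_
  · exact (aestronglyMeasurable_const.mul hfmeas.aestronglyMeasurable).mul
      (u.memL2.restrict Ω).aestronglyMeasurable
  · refine (ae_restrict_mem hΩopen.measurableSet).mono fun x hx => ?_
    have h1 : |f x| ≤ Cf := hCf x hx
    have h2 : 0 ≤ |u.toFun x| := abs_nonneg _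
    rw [Real.norm_eq_abs, abs_mul, abs_mul, abs_two]
    nlinarith [abs_nonneg (f x)]

lemma int_gchi (hΩopen : IsOpen Ω) (hΩbdd : Bornology.IsBounded Ω) (hgmeas : Measurable g)
    (hCg : ∀ x ∈ Ω, |g x| ≤ Cg) (u : H10 n Ω) :
    Integrable (fun x => (g x) ^ 2 * chi (posSet Ω u.toFun) x)
      ((volume : Measure (Euc n)).restrict Ω) := by
  haveI := finiteRestrict hΩbdd
  refine (integrable_const (Cg ^ 2)).mono' ?_ ?_
  · exact ((hgmeas.pow_const 2).aestronglyMeasurable).mul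
      (measurable_const.indicator (isOpen_posSet u.toFun).measurableSet).aestronglyMeasurable
  · refine (ae_restrict_mem hΩopen.measurableSet).mono fun x hx => ?_
    have h1 : |g x| ≤ Cg := hCg x hx
    have h2 : 0 ≤ chi (posSet Ω u.toFun) x := chi_nonneg _ _
    have h3 : chi (posSet Ω u.toFun) x ≤ 1 := chi_le_one _ _
    rw [Real.norm_eq_abs, abs_mul, abs_of_nonneg (sq_nonneg (g x)), abs_of_nonneg h2]
    nlinarith [abs_nonneg (g x), sq_abs (g x)]

lemma J_split (hΩopen : IsOpen Ω) (hΩbdd : Bornology.IsBounded Ω) (hfmeas : Measurable f)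
    (hgmeas : Measurable g) (hCf : ∀ x ∈ Ω, |f x| ≤ Cf) (hCg : ∀ x ∈ Ω, |g x| ≤ Cg)
    (lam : ℝ) (u : H10 n Ω) :
    Jfun f g lam Ω u = (∫ x in Ω, ‖u.grad x‖ ^ 2) - lam * (∫ x in Ω, (u.toFun x) ^ 2)
      - (∫ x in Ω, 2 * f x * u.toFun x)
      + (∫ x in Ω, (g x) ^ 2 * chi (posSet Ω u.toFun) x) := by
  have h2 : Integrable (fun x => lam * (u.toFun x) ^ 2)
      ((volume : Measure (Euc n)).restrict Ω) := (int_u_sq u).const_mul lam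
  have h12 : Integrable (fun x => ‖u.grad x‖ ^ 2 - lam * (u.toFun x) ^ 2)
      ((volume : Measure (Euc n)).restrict Ω) := (int_grad_sq u).sub h2
  have h123 : Integrable
      (fun x => ‖u.grad x‖ ^ 2 - lam * (u.toFun x) ^ 2 - 2 * f x * u.toFun x)
      ((volume : Measure (Euc n)).restrict Ω) := h12.sub (int_fu hΩopen hΩbdd hfmeas hCf u)
  unfold Jfun
  rw [integral_add h123 (int_gchi hΩopen hΩbdd hgmeas hCg u),
    integral_sub h12 (int_fu hΩopen hΩbdd hfmeas hCf u),
    integral_sub (int_grad_sq u) h2, MeasureTheory.integral_const_mul]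

lemma int_abs_u_le (hΩbdd : Bornology.IsBounded Ω) (u : H10 n Ω) :
    (∫ x in Ω, ‖u.toFun x‖) ≤ Real.sqrt (volume Ω).toReal
      * Real.sqrt (∫ x in Ω, (u.toFun x) ^ 2) := by
  haveI := finiteRestrict hΩbdd
  set μ := (volume : Measure (Euc n)).restrict Ω with hμd
  have huA : MemLp (fun x => ‖u.toFun x‖) 2 μ := (u.memL2.restrict Ω).norm
  have h1L : MemLp (fun _ : Euc n => (1 : ℝ)) 2 μ := memLp_const 1
  set uA := huA.toLp _ with huAd
  set oneL := h1L.toLp _ with honeLd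
  have h1 : ⟪oneL, uA⟫ = ∫ x, ‖u.toFun x‖ ∂μ := by
    rw [MeasureTheory.L2.inner_def]
    refine integral_congr_ae ?_
    filter_upwards [h1L.coeFn_toLp, huA.coeFn_toLp] with x hx1 hx2
    rw [hx1, hx2, RCLike.inner_apply]
    simp
  have h3 : ‖oneL‖ = Real.sqrt (volume Ω).toReal := by
    have hsq : ‖oneL‖ ^ 2 = (volume Ω).toReal := by
      rw [honeLd, norm_toLp_sq]
      simp only [norm_one, one_pow, integral_const, smul_eq_mul, mul_one]
      rw [hμd, measureReal_restrict_apply_univ, measureReal_def]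
    rw [← Real.sqrt_sq (norm_nonneg oneL), hsq]
  have h4 : ‖uA‖ = Real.sqrt (∫ x in Ω, (u.toFun x) ^ 2) := by
    have hsq : ‖uA‖ ^ 2 = ∫ x in Ω, (u.toFun x) ^ 2 := by
      rw [huAd, norm_toLp_sq]
      refine integral_congr_ae (Filter.Eventually.of_forall fun x => ?_)
      simp [sq_norm_real]
    rw [← Real.sqrt_sq (norm_nonneg uA), hsq]
  calc (∫ x in Ω, ‖u.toFun x‖) = ⟪oneL, uA⟫ := h1.symm
    _ ≤ ‖oneL‖ * ‖uA‖ := real_inner_le_norm _ _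
    _ = _ := by rw [h3, h4]

lemma int_fu_le (hΩopen : IsOpen Ω) (hΩbdd : Bornology.IsBounded Ω) (hfmeas : Measurable f)
    (hCf : ∀ x ∈ Ω, |f x| ≤ Cf) (hCf0 : 0 ≤ Cf) (u : H10 n Ω) :
    (∫ x in Ω, 2 * f x * u.toFun x) ≤ (2 * Cf * Real.sqrt (volume Ω).toReal)
      * Real.sqrt (∫ x in Ω, (u.toFun x) ^ 2) := by
  have step1 : (∫ x in Ω, 2 * f x * u.toFun x) ≤ ∫ x in Ω, (2 * Cf) * ‖u.toFun x‖ := by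
    refine integral_mono_ae (int_fu hΩopen hΩbdd hfmeas hCf u)
      (((int_u hΩbdd u).norm).const_mul _) ?_
    refine (ae_restrict_mem hΩopen.measurableSet).mono fun x hx => ?_
    have h1 : |f x| ≤ Cf := hCf x hx
    have h2 : 2 * f x * u.toFun x ≤ |2 * f x * u.toFun x| := le_abs_self _
    show 2 * f x * u.toFun x ≤ 2 * Cf * ‖u.toFun x‖
    rw [Real.norm_eq_abs]
    rw [abs_mul, abs_mul, abs_two] at h2
    nlinarith [abs_nonneg (f x), abs_nonneg (u.toFun x), neg_abs_le (u.toFun x),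
      le_abs_self (u.toFun x)]
  have step2 := int_abs_u_le hΩbdd u
  calc (∫ x in Ω, 2 * f x * u.toFun x) ≤ ∫ x in Ω, (2 * Cf) * ‖u.toFun x‖ := step1
    _ = (2 * Cf) * ∫ x in Ω, ‖u.toFun x‖ := MeasureTheory.integral_const_mul _ _
    _ ≤ (2 * Cf) * (Real.sqrt (volume Ω).toReal * Real.sqrt (∫ x in Ω, (u.toFun x) ^ 2)) := by
        apply mul_le_mul_of_nonneg_left step2; linarith
    _ = _ := by ring

lemma J_lower (hΩopen : IsOpen Ω) (hΩbdd : Bornology.IsBounded Ω) (hfmeas : Measurable f)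
    (hgmeas : Measurable g) (hCf : ∀ x ∈ Ω, |f x| ≤ Cf) (hCg : ∀ x ∈ Ω, |g x| ≤ Cg)
    (hCf0 : 0 ≤ Cf) (lam : ℝ) (u : H10 n Ω) :
    (fundTone Ω - lam) * (∫ x in Ω, (u.toFun x) ^ 2)
      - (2 * Cf * Real.sqrt (volume Ω).toReal) * Real.sqrt (∫ x in Ω, (u.toFun x) ^ 2)
      ≤ Jfun f g lam Ω u := by
  have hpoi := h10_poincare u
  have hI4 : 0 ≤ ∫ x in Ω, (g x) ^ 2 * chi (posSet Ω u.toFun) x :=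
    integral_nonneg fun x => mul_nonneg (sq_nonneg _) (chi_nonneg _ _)
  have hI3 := int_fu_le hΩopen hΩbdd hfmeas hCf hCf0 u
  rw [J_split hΩopen hΩbdd hfmeas hgmeas hCf hCg lam u]
  nlinarith [hpoi, hI4, hI3]

end PhiAux

set_option maxHeartbeats 1000000 in
/-- properties of the value function `Φ`. -/
theorem Phi_concave {n : ℕ} (hn : 2 ≤ n) (Ω : Set (Euc n)) (hΩopen : IsOpen Ω)
    (hΩbdd : Bornology.IsBounded Ω) (hΩc1 : HasC1Boundary Ω)
    (f g : Euc n → ℝ) (hfmeas : Measurable f) (hfbdd : BddOn Ω f)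
    (hgmeas : Measurable g) (hgbdd : BddOn Ω g) (hg0 : ∀ x ∈ Ω, 0 ≤ g x) :
    (∀ lam : ℝ, lam < fundTone Ω →
      BddBelow {r : ℝ | ∃ u : H10 n Ω, memK u ∧ r = Jfun f g lam Ω u} ∧
      Phi f g Ω lam ≤ 0) ∧
    (∀ lam₁ lam₂ : ℝ, lam₁ < fundTone Ω → lam₂ < fundTone Ω →
      ∀ t : ℝ, 0 ≤ t → t ≤ 1 →
        t * Phi f g Ω lam₁ + (1 - t) * Phi f g Ω lam₂
          ≤ Phi f g Ω (t * lam₁ + (1 - t) * lam₂)) ∧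
    (∀ lam₀ : ℝ, lam₀ < fundTone Ω → Phi f g Ω lam₀ < 0 →
      ∃ δ : ℝ, 0 < δ ∧ lam₀ + δ ≤ fundTone Ω ∧
        StrictAntiOn (Phi f g Ω) (Ioo (lam₀ - δ) (lam₀ + δ))) := by
    classical
  obtain ⟨C0, hC0⟩ := hfbdd
  obtain ⟨Cg, hCg'⟩ := hgbdd
  set Cf := max C0 0 with hCfd
  have hCf : ∀ x ∈ Ω, |f x| ≤ Cf := fun x hx => le_trans (hC0 x hx) (le_max_left _ _)
  have hCf0 : (0 : ℝ) ≤ Cf := le_max_right _ _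
  set C := 2 * Cf * Real.sqrt (volume Ω).toReal with hCd
  have hC0' : (0 : ℝ) ≤ C := by positivity
  have hPhidef : ∀ lam : ℝ, Phi f g Ω lam
      = sInf {r : ℝ | ∃ u : H10 n Ω, memK u ∧ r = Jfun f g lam Ω u} := fun _ => rfl
  have hmemS : ∀ lam : ℝ,
      (0 : ℝ) ∈ {r : ℝ | ∃ u : H10 n Ω, memK u ∧ r = Jfun f g lam Ω u} :=
    fun lam => ⟨zeroH10 n Ω, memK_zero Ω, (J_zero hΩopen f g lam).symm⟩
  have hSne : ∀ lam : ℝ,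
      Set.Nonempty {r : ℝ | ∃ u : H10 n Ω, memK u ∧ r = Jfun f g lam Ω u} :=
    fun lam => ⟨0, hmemS lam⟩
  have hJlb : ∀ (lam : ℝ) (u : H10 n Ω),
      (fundTone Ω - lam) * (∫ x in Ω, (u.toFun x) ^ 2)
        - C * Real.sqrt (∫ x in Ω, (u.toFun x) ^ 2) ≤ Jfun f g lam Ω u :=
    fun lam u => J_lower hΩopen hΩbdd hfmeas hgmeas hCf hCg' hCf0 lam u
  have hquad : ∀ lam : ℝ, lam < fundTone Ω → ∀ u : H10 n Ω,
      -(C ^ 2 / (4 * (fundTone Ω - lam))) ≤ Jfun f g lam Ω u := by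
    intro lam hlam u
    set B := ∫ x in Ω, (u.toFun x) ^ 2 with hBd
    have hB0 : 0 ≤ B := integral_nonneg fun x => sq_nonneg _
    set s := Real.sqrt B with hsd
    have hs0 : 0 ≤ s := Real.sqrt_nonneg _
    have hsB : s ^ 2 = B := Real.sq_sqrt hB0
    have hd : 0 < fundTone Ω - lam := by linarith
    have h1 := hJlb lam u
    have hq : C ^ 2 = 4 * (fundTone Ω - lam) * (C ^ 2 / (4 * (fundTone Ω - lam))) := by
      field_simp
    nlinarith [sq_nonneg (2 * (fundTone Ω - lam) * s - C), mul_pos hd hd]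
  have hBddB : ∀ lam : ℝ, lam < fundTone Ω →
      BddBelow {r : ℝ | ∃ u : H10 n Ω, memK u ∧ r = Jfun f g lam Ω u} := by
    intro lam hlam
    refine ⟨-(C ^ 2 / (4 * (fundTone Ω - lam))), ?_⟩
    rintro r ⟨u, hu, rfl⟩
    exact hquad lam hlam u
  have hPhile : ∀ lam : ℝ, lam < fundTone Ω → ∀ u : H10 n Ω, memK u →
      Phi f g Ω lam ≤ Jfun f g lam Ω u := by
    intro lam hlam u hu
    rw [hPhidef lam]
    exact csInf_le (hBddB lam hlam) ⟨u, hu, rfl⟩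
  refine ⟨?_, ?_, ?_⟩
  · intro lam hlam
    refine ⟨hBddB lam hlam, ?_⟩
    rw [hPhidef lam]
    exact csInf_le (hBddB lam hlam) (hmemS lam)
  · intro l1 l2 h1 h2 t ht0 ht1
    rw [hPhidef (t * l1 + (1 - t) * l2)]
    refine le_csInf (hSne _) ?_
    rintro r ⟨u, hu, rfl⟩
    have key : Jfun f g (t * l1 + (1 - t) * l2) Ω u
        = t * Jfun f g l1 Ω u + (1 - t) * Jfun f g l2 Ω u := by
      rw [J_split hΩopen hΩbdd hfmeas hgmeas hCf hCg' (t * l1 + (1 - t) * l2) u,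
        J_split hΩopen hΩbdd hfmeas hgmeas hCf hCg' l1 u,
        J_split hΩopen hΩbdd hfmeas hgmeas hCf hCg' l2 u]
      ring
    rw [key]
    have p1 := hPhile l1 h1 u hu
    have p2 := hPhile l2 h2 u hu
    have q1 : t * Phi f g Ω l1 ≤ t * Jfun f g l1 Ω u := mul_le_mul_of_nonneg_left p1 ht0
    have q2 : (1 - t) * Phi f g Ω l2 ≤ (1 - t) * Jfun f g l2 Ω u :=
      mul_le_mul_of_nonneg_left p2 (by linarith)
    linarith
  · intro lam₀ hlam₀ hneg
    set P₀ := Phi f g Ω lam₀ with hP₀d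
    have hd₀ : 0 < fundTone Ω - lam₀ := by linarith
    have hCpos : 0 < C := by
      rcases lt_or_eq_of_le hC0' with h | h
      · exact h
      · exfalso
        have hall : ∀ r ∈ {r : ℝ | ∃ u : H10 n Ω, memK u ∧ r = Jfun f g lam₀ Ω u},
            (0 : ℝ) ≤ r := by
          rintro r ⟨u, hu, rfl⟩
          have hlb := hJlb lam₀ u
          have hB0 : 0 ≤ ∫ x in Ω, (u.toFun x) ^ 2 := integral_nonneg fun x => sq_nonneg _
          nlinarith [Real.sqrt_nonneg (∫ x in Ω, (u.toFun x) ^ 2)]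
        have h0 : (0 : ℝ) ≤ P₀ := by
          rw [hP₀d, hPhidef lam₀]
          exact le_csInf (hSne lam₀) hall
        linarith
    obtain ⟨r₀, hr₀S, hr₀⟩ := exists_lt_of_csInf_lt (hSne lam₀)
      (show sInf {r : ℝ | ∃ u : H10 n Ω, memK u ∧ r = Jfun f g lam₀ Ω u} < P₀ / 2 by
        rw [← hPhidef lam₀, ← hP₀d]; linarith)
    obtain ⟨u₀, hu₀K, hru₀⟩ := hr₀S
    set B₀ := ∫ x in Ω, (u₀.toFun x) ^ 2 with hB₀d
    have hB₀0 : 0 ≤ B₀ := integral_nonneg fun x => sq_nonneg _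
    set δ := min ((fundTone Ω - lam₀) / 2) ((-P₀ / 8) / (B₀ + 1)) with hδd
    have hδ1 : δ ≤ (fundTone Ω - lam₀) / 2 := min_le_left _ _
    have hδ2 : δ ≤ (-P₀ / 8) / (B₀ + 1) := min_le_right _ _
    have hδpos : 0 < δ :=
      lt_min (by linarith) (div_pos (by linarith) (by linarith))
    have hJu : ∀ (lam lam' : ℝ) (u : H10 n Ω), Jfun f g lam' Ω u
        = Jfun f g lam Ω u + (lam - lam') * (∫ x in Ω, (u.toFun x) ^ 2) := by
      intro lam lam' u
      rw [J_split hΩopen hΩbdd hfmeas hgmeas hCf hCg' lam' u,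
        J_split hΩopen hΩbdd hfmeas hgmeas hCf hCg' lam u]
      ring
    have hδB : δ * B₀ ≤ -P₀ / 8 := by
      have h2 : ((-P₀ / 8) / (B₀ + 1)) * (B₀ + 1) = -P₀ / 8 :=
        div_mul_cancel₀ _ (by linarith)
      nlinarith
    have hsmall : ∀ lam ∈ Ioo (lam₀ - δ) (lam₀ + δ),
        lam < fundTone Ω ∧ Phi f g Ω lam ≤ P₀ / 4 := by
      rintro lam ⟨hl1, hl2⟩
      have hlt : lam < fundTone Ω := by linarith
      refine ⟨hlt, ?_⟩
      have hle := hPhile lam hlt u₀ hu₀K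
      rw [hJu lam₀ lam u₀, ← hB₀d] at hle
      have hmul : (lam₀ - lam) * B₀ ≤ δ * B₀ :=
        mul_le_mul_of_nonneg_right (by linarith) hB₀0
      rw [← hru₀] at hle
      linarith
    set m := (-P₀ / 8) / C with hmd
    have hm0 : 0 < m := div_pos (by linarith) hCpos
    have hmC : C * m = -P₀ / 8 := by
      rw [hmd]; field_simp
    refine ⟨δ, hδpos, by linarith, ?_⟩
    intro a ha b hb hab
    obtain ⟨hal, hPa⟩ := hsmall a ha
    obtain ⟨hbl, _⟩ := hsmall b hb
    have key : Phi f g Ω b ≤ Phi f g Ω a - (b - a) * m ^ 2 := by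
      refine _root_.le_of_forall_pos_le_add fun η hη => ?_
      set ε := min η (-P₀ / 8) with hεd
      have hεpos : 0 < ε := lt_min hη (by linarith)
      have hεle : ε ≤ -P₀ / 8 := min_le_right _ _
      have hεη : ε ≤ η := min_le_left _ _
      obtain ⟨r, hrS, hrlt⟩ := exists_lt_of_csInf_lt (hSne a)
        (show sInf {r : ℝ | ∃ u : H10 n Ω, memK u ∧ r = Jfun f g a Ω u}
            < Phi f g Ω a + ε by rw [← hPhidef a]; linarith)
      obtain ⟨u, huK, rfl⟩ := hrS
      have hJa : Jfun f g a Ω u < P₀ / 8 := by linarith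
      set B := ∫ x in Ω, (u.toFun x) ^ 2 with hBd
      have hB0 : 0 ≤ B := integral_nonneg fun x => sq_nonneg _
      have hlb := hJlb a u
      rw [← hBd] at hlb
      have hsqB : m ≤ Real.sqrt B := by
        by_contra hcon
        push_neg at hcon
        have h1 : 0 ≤ (fundTone Ω - a) * B := mul_nonneg (by linarith) hB0
        have h2 : C * Real.sqrt B < C * m := mul_lt_mul_of_pos_left hcon hCpos
        linarith
      have hBm : m ^ 2 ≤ B := by
        have h := pow_le_pow_left₀ hm0.le hsqB 2
        rwa [Real.sq_sqrt hB0] at h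
      have hJb : Jfun f g b Ω u = Jfun f g a Ω u + (a - b) * B := by
        rw [hJu a b u, ← hBd]
      have hPb := hPhile b hbl u huK
      rw [hJb] at hPb
      have hmono : (b - a) * m ^ 2 ≤ (b - a) * B :=
        mul_le_mul_of_nonneg_left hBm (by linarith)
      linarith
    have hpos : 0 < (b - a) * m ^ 2 := mul_pos (by linarith) (pow_pos hm0 2)
    linarith
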